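/- For every n ≥ 2, let G_n be the complement of the spider consisting of a center c and n legs each with 3 vertices (that is, G_n has vertex set {c} ∪ {v_{i,1}, v_{i,2}, v_{i,3} : 1 ≤ i ≤ n}, and two distinct vertices are adjacent except for the pairs {c, v_{i,1}}, {v_{i,1}, v_{i,2}} and {v_{i,2}, v_{i,3}} for each i). Then G_n is connected and co-connected, so τ(G_n) = 3n − 1, and the family {{c, v_{i,1}, v_{i,2}, v_{i,3}} : 1 ≤ i ≤ n} is a connecting hypergraph of G_n of cost 2n; hence the ratio τ(G_n)/opt(G_n) tends to 3/2, where opt(G_n) denotes the minimum cost of a connecting hypergraph of G_n. -/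

import Mathlib

variable {V : Type*}

/-- The transition consisting of the edges `ab` and `bc`, written `abc`. -/
def transitionOf (a b c : V) : Sym2 (Sym2 V) := s(s(a, b), s(b, c))

/-- `t` is a transition of `G`: an unordered pair of two distinct adjacent edges. -/
def SimpleGraph.IsTransition (G : SimpleGraph V) (t : Sym2 (Sym2 V)) : Prop :=
  ∃ a b c, G.Adj a b ∧ G.Adj b c ∧ a ≠ c ∧ t = transitionOf a b c

/-- A list of vertices (the support of a walk) is `T`-compatible: every pair of
consecutive edges is either a transition of `T` or a backtrack. -/
def TCompatible (T : Set (Sym2 (Sym2 V))) (l : List V) : Prop :=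
  ∀ (i : ℕ) (h : i + 2 < l.length),
    l[i]'(by omega) = l[i + 2]'h ∨
    transitionOf (l[i]'(by omega)) (l[i + 1]'(by omega)) (l[i + 2]'h) ∈ T

/-- `G` is `T`-connected: every two vertices are joined by a `T`-compatible walk. -/
def SimpleGraph.TConnected (G : SimpleGraph V) (T : Set (Sym2 (Sym2 V))) : Prop :=
  ∀ u v : V, ∃ p : G.Walk u v, TCompatible T p.support

/-- `T` is a connecting transition set of `G`. -/
def SimpleGraph.ConnectingTransitionSet (G : SimpleGraph V)
    (T : Finset (Sym2 (Sym2 V))) : Prop :=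
  (∀ t ∈ T, G.IsTransition t) ∧ G.TConnected ↑T

/-- `H` is a connecting hypergraph of `G`: every hyperedge has at least two vertices and
induces a connected subgraph, and every pair of distinct non-adjacent vertices is
contained in a common hyperedge. -/
def SimpleGraph.ConnectingHypergraph (G : SimpleGraph V) (H : Finset (Finset V)) : Prop :=
  (∀ E ∈ H, 2 ≤ E.card ∧ (G.induce (E : Set V)).Connected) ∧
  ∀ u v : V, u ≠ v → ¬G.Adj u v → ∃ E ∈ H, u ∈ E ∧ v ∈ E

/-- The cost of a hypergraph: the sum over hyperedges of (size − 2). -/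
def hcost (H : Finset (Finset V)) : ℕ := ∑ E ∈ H, (E.card - 2)

/-- The quantity τ(G): the sum over co-connected components `C` of `G` with `|C| ≥ 2`
of `|C| − 2` if `G[C]` is connected and `|C| − 1` otherwise. -/
noncomputable def tau {V : Type*} [Fintype V] (G : SimpleGraph V) : ℕ := by
  classical
  haveI : Fintype Gᶜ.ConnectedComponent := Fintype.ofFinite _
  exact ∑ C : Gᶜ.ConnectedComponent,
    if 2 ≤ C.supp.ncard then
      (if (G.induce C.supp).Connected then C.supp.ncard - 2 else C.supp.ncard - 1)
    else 0

/-- The non-adjacency relation of the spider: the center `none` is joined to the first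
vertex of each leg, and consecutive vertices of a leg are joined. -/
def spiderRel (n : ℕ) (u v : Option (Fin n × Fin 3)) : Prop :=
  (u = none ∧ ∃ i : Fin n, v = some (i, 0)) ∨
  (∃ i : Fin n, u = some (i, 0) ∧ v = some (i, 1)) ∨
  (∃ i : Fin n, u = some (i, 1) ∧ v = some (i, 2))

/-- The spider with center `none` and `n` legs, each with 3 vertices. -/
def spider (n : ℕ) : SimpleGraph (Option (Fin n × Fin 3)) :=
  SimpleGraph.fromRel (spiderRel n)

/-- `Gₙ`: the complement of the spider with `n` legs of 3 vertices. -/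
def Gn (n : ℕ) : SimpleGraph (Option (Fin n × Fin 3)) := (spider n)ᶜ

/-- The hypergraph whose hyperedges are the sets `{c, v_{i,1}, v_{i,2}, v_{i,3}}`. -/
def legs (n : ℕ) : Finset (Finset (Option (Fin n × Fin 3))) :=
  Finset.univ.image fun i : Fin n =>
    ({none, some (i, 0), some (i, 1), some (i, 2)} : Finset (Option (Fin n × Fin 3)))

/-- The minimum cost of a connecting hypergraph of `Gₙ`. -/
noncomputable def opt (n : ℕ) : ℕ :=
  sInf {c : ℕ | ∃ H, (Gn n).ConnectingHypergraph H ∧ hcost H = c}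

/-! The heart of the matter is the lower bound `opt n ≥ 2n`. The complement of `Gₙ` is the
spider, a tree with `3n` edges, and each of its edges, being a non-edge of `Gₙ`, lies inside
some hyperedge `E`. The spider edges inside `E` form a forest, so there are at most `|E| - 1` of
them; and since `Gₙ[E]` is connected, every vertex of `E` misses some other vertex of `E` in the
spider, so there are also at most `|E| (|E| - 2) / 2` of them. The first bound for `|E| ≥ 4` and
the second for `|E| ≤ 3` give at most `3 (|E| - 2) / 2` spider edges in `E`, whence
`3n ≤ 3 cost(H) / 2`. The legs attain this bound, and as `Gₙ` is co-connected,
`τ(Gₙ) = (3n + 1) - 2`. -/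

open SimpleGraph Finset

namespace SimpleGraph

variable {G T : SimpleGraph V}

theorem IsAcyclic.card_edgeFinset_add_one_le [Fintype V] [Nonempty V] [Fintype G.edgeSet]
    (hG : G.IsAcyclic) : #G.edgeFinset + 1 ≤ Fintype.card V := by
  classical
  obtain ⟨T, hGT, -, hT⟩ := connected_top.exists_isTree_le_of_le_of_isAcyclic le_top hG
  rw [← hT.card_edgeFinset]
  exact Nat.add_le_add_right (card_le_card (edgeFinset_mono hGT)) 1

theorem two_mul_card_edgeFinset_le_of_connected_compl [Fintype V] [Nontrivial V]
    [DecidableRel G.Adj] (hG : Gᶜ.Connected) :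
    2 * #G.edgeFinset ≤ Fintype.card V * (Fintype.card V - 2) := by
  classical
  rw [← sum_degrees_eq_twice_card_edges]
  calc ∑ v, G.degree v ≤ ∑ _v : V, (Fintype.card V - 2) := by
        refine sum_le_sum fun v _ => ?_
        have hcompl : Gᶜ.degree v + G.degree v = Fintype.card V - 1 := by
          have := G.degree_lt_card_verts v
          rw [degree_compl]; omega
        have := hG.preconnected.degree_pos_of_nontrivial v
        omega
    _ = Fintype.card V * (Fintype.card V - 2) := by simp

theorem IsAcyclic.two_mul_card_edgeFinset_le [Fintype V]
    [DecidableRel G.Adj] (hG : G.IsAcyclic) (hGc : Gᶜ.Connected) (hV : 2 ≤ Fintype.card V) :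
    2 * #G.edgeFinset ≤ 3 * (Fintype.card V - 2) := by
  have : Nontrivial V := Fintype.one_lt_card_iff_nontrivial.mp hV
  have hforest := hG.card_edgeFinset_add_one_le
  have hdense := two_mul_card_edgeFinset_le_of_connected_compl hGc
  obtain h | h | h : Fintype.card V = 2 ∨ Fintype.card V = 3 ∨ 4 ≤ Fintype.card V := by omega
  · rw [h] at hdense; omega
  · rw [h] at hdense hforest; omega
  · omega

theorem IsAcyclic.two_mul_ncard_edgeSet_induce_le (hT : T.IsAcyclic) {E : Finset V}
    (hE : 2 ≤ #E) (hconn : (Tᶜ.induce (E : Set V)).Connected) :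
    2 * (T.induce (E : Set V)).edgeSet.ncard ≤ 3 * (#E - 2) := by
  classical
  have hcompl : (T.induce (E : Set V))ᶜ = Tᶜ.induce (E : Set V) := by
    ext u v
    simp only [compl_adj, induce_adj, ne_eq, Subtype.ext_iff]
  have := (hT.induce (E : Set V)).two_mul_card_edgeFinset_le (hcompl ▸ hconn) (by simpa using hE)
  simpa [Set.ncard_eq_toFinset_card', edgeFinset] using this

theorem IsAcyclic.two_mul_ncard_edgeSet_le_hcost [Finite V] (hT : T.IsAcyclic)
    {H : Finset (Finset V)} (hH : Tᶜ.ConnectingHypergraph H) :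
    2 * T.edgeSet.ncard ≤ 3 * hcost H := by
  have hcover :
      T.edgeSet ⊆ ⋃ E ∈ H, Sym2.map Subtype.val '' (T.induce (E : Set V)).edgeSet := by
    rintro ⟨u, v⟩ huv
    obtain ⟨E, hEH, hu, hv⟩ := hH.2 u v (T.ne_of_adj huv) fun h => h.2 huv
    exact Set.mem_biUnion hEH ⟨s(⟨u, hu⟩, ⟨v, hv⟩), huv, rfl⟩
  calc 2 * T.edgeSet.ncard
      ≤ 2 * ∑ E ∈ H, (T.induce (E : Set V)).edgeSet.ncard := by
        gcongr
        refine (Set.ncard_le_ncard hcover (Set.toFinite _)).trans ?_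
        refine (H.set_ncard_biUnion_le _).trans (sum_le_sum fun E _ => ?_)
        rw [Set.ncard_image_of_injective _ (Sym2.map.injective Subtype.val_injective)]
    _ ≤ 3 * hcost H := by
        rw [hcost, mul_sum, mul_sum]
        exact sum_le_sum fun E hE => hT.two_mul_ncard_edgeSet_induce_le (hH.1 E hE).1 (hH.1 E hE).2

end SimpleGraph

theorem tau_eq_card_sub_two [Fintype V] {G : SimpleGraph V} (hG : G.Connected)
    (hGc : Gᶜ.Connected) (hV : 2 ≤ Fintype.card V) : tau G = Fintype.card V - 2 := by
  have := hGc.preconnected.subsingleton_connectedComponent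
  obtain ⟨v⟩ := hGc.nonempty
  have hsupp (C : Gᶜ.ConnectedComponent) : C.supp = Set.univ :=
    Set.eq_univ_of_forall fun w => (C.mem_supp_iff w).2 (Subsingleton.elim _ _)
  have hconn (C : Gᶜ.ConnectedComponent) : (G.induce C.supp).Connected := by
    rw [hsupp C]
    exact (induceUnivIso G).connected_iff.2 hG
  unfold tau
  simp only [hconn, if_true, hsupp, Set.ncard_univ, Nat.card_eq_fintype_card, if_pos hV]
  convert Fintype.sum_subsingleton _ (Gᶜ.connectedComponentMk v)

section Spider

variable {n : ℕ}

def spiderParent : Fin n × Fin 3 → Option (Fin n × Fin 3)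
  | (_, 0) => none
  | (i, 1) => some (i, 0)
  | (i, 2) => some (i, 1)

theorem spiderParent_ne_some (k : Fin n × Fin 3) : spiderParent k ≠ some k := by
  obtain ⟨i, j⟩ := k
  fin_cases j <;> simp [spiderParent]

theorem spiderRel_iff {u v : Option (Fin n × Fin 3)} :
    spiderRel n u v ↔ ∃ k, spiderParent k = u ∧ some k = v := by
  constructor
  · rintro (⟨rfl, i, rfl⟩ | ⟨i, rfl, rfl⟩ | ⟨i, rfl, rfl⟩)
    exacts [⟨(i, 0), rfl, rfl⟩, ⟨(i, 1), rfl, rfl⟩, ⟨(i, 2), rfl, rfl⟩]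
  · rintro ⟨⟨i, j⟩, rfl, rfl⟩
    fin_cases j <;> simp [spiderRel, spiderParent]

def spiderEdge (k : Fin n × Fin 3) : Sym2 (Option (Fin n × Fin 3)) := s(spiderParent k, some k)

theorem spider_adj_iff {u v : Option (Fin n × Fin 3)} :
    (spider n).Adj u v ↔ ∃ k, spiderEdge k = s(u, v) := by
  simp only [spider, spiderEdge, fromRel_adj, spiderRel_iff, Sym2.eq_iff]
  constructor
  · rintro ⟨-, ⟨k, rfl, rfl⟩ | ⟨k, rfl, rfl⟩⟩
    exacts [⟨k, .inl ⟨rfl, rfl⟩⟩, ⟨k, .inr ⟨rfl, rfl⟩⟩]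
  · rintro ⟨k, ⟨rfl, rfl⟩ | ⟨rfl, rfl⟩⟩
    exacts [⟨spiderParent_ne_some k, .inl ⟨k, rfl, rfl⟩⟩,
      ⟨(spiderParent_ne_some k).symm, .inr ⟨k, rfl, rfl⟩⟩]

theorem spider_edgeSet : (spider n).edgeSet = Set.range spiderEdge := by
  ext e
  induction e using Sym2.ind
  simp [spider_adj_iff]

theorem spiderEdge_injective : Function.Injective (spiderEdge (n := n)) := by
  rintro ⟨i, j⟩ ⟨i', j'⟩ h
  fin_cases j <;> fin_cases j' <;> simp_all [spiderEdge, spiderParent]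

theorem spider_adj_spiderParent (k : Fin n × Fin 3) : (spider n).Adj (spiderParent k) (some k) :=
  spider_adj_iff.2 ⟨k, rfl⟩

theorem spider_connected : (spider n).Connected := by
  refine (connected_iff_exists_forall_reachable _).2 ⟨none, ?_⟩
  rintro (_ | ⟨i, j⟩)
  · rfl
  have h0 := (spider_adj_spiderParent (i, 0)).reachable
  have h1 := h0.trans (spider_adj_spiderParent (i, 1)).reachable
  have h2 := h1.trans (spider_adj_spiderParent (i, 2)).reachable
  fin_cases j
  exacts [h0, h1, h2]

theorem ncard_spider_edgeSet : (spider n).edgeSet.ncard = 3 * n := by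
  rw [spider_edgeSet, Set.ncard_range_of_injective spiderEdge_injective]
  simp [mul_comm]

theorem spider_isTree : (spider n).IsTree := by
  refine isTree_iff_connected_and_card.2 ⟨spider_connected, ?_⟩
  rw [Nat.card_coe_set_eq, ncard_spider_edgeSet]
  simp [mul_comm]

def leg (i : Fin n) : Finset (Option (Fin n × Fin 3)) :=
  {none, some (i, 0), some (i, 1), some (i, 2)}

theorem card_leg (i : Fin n) : #(leg i) = 4 := by simp [leg]

theorem leg_injective : Function.Injective (leg (n := n)) := by
  intro i j h
  have : some (i, 0) ∈ leg j := h ▸ by simp [leg]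
  simpa [leg] using this

theorem spiderEdge_mem_sym2_leg (k : Fin n × Fin 3) : spiderEdge k ∈ (leg k.1).sym2 := by
  obtain ⟨i, j⟩ := k
  fin_cases j <;> simp [spiderEdge, leg, spiderParent]

theorem compl_Gn : (Gn n)ᶜ = spider n := compl_compl _

theorem induce_leg_connected (i : Fin n) : ((Gn n).induce (leg i : Set _)).Connected := by
  let S : Set (Option (Fin n × Fin 3)) := leg i
  let c : S := ⟨none, by simp [S, leg]⟩
  let v₀ : S := ⟨some (i, 0), by simp [S, leg]⟩
  let v₁ : S := ⟨some (i, 1), by simp [S, leg]⟩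
  let v₂ : S := ⟨some (i, 2), by simp [S, leg]⟩
  have h₁ : ((Gn n).induce _).Adj c v₁ := by simp [c, v₁, Gn, spider, spiderRel]
  have h₂ : ((Gn n).induce _).Adj c v₂ := by simp [c, v₂, Gn, spider, spiderRel]
  have h₂₀ : ((Gn n).induce _).Adj v₂ v₀ := by simp [v₀, v₂, Gn, spider, spiderRel]
  refine (connected_iff_exists_forall_reachable _).2 ⟨c, ?_⟩
  rintro ⟨v, hv⟩
  simp only [leg, coe_insert, coe_singleton, Set.mem_insert_iff, Set.mem_singleton_iff] at hv
  rcases hv with rfl | rfl | rfl | rfl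
  exacts [.rfl, h₂.reachable.trans h₂₀.reachable, h₁.reachable, h₂.reachable]

theorem Gn_connected (hn : 2 ≤ n) : (Gn n).Connected := by
  have : Nontrivial (Fin n) := Fin.nontrivial_iff_two_le.2 hn
  refine (connected_iff_exists_forall_reachable _).2 ⟨none, ?_⟩
  rintro (_ | ⟨i, j⟩)
  · rfl
  obtain ⟨i', hi'⟩ := exists_ne i
  have h₁ : (Gn n).Adj none (some (i, 1)) := by simp [Gn, spider, spiderRel]
  have h₂ : (Gn n).Adj none (some (i, 2)) := by simp [Gn, spider, spiderRel]
  have h₁' : (Gn n).Adj none (some (i', 1)) := by simp [Gn, spider, spiderRel]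
  have h₁'₀ : (Gn n).Adj (some (i', 1)) (some (i, 0)) := by simp [Gn, spider, spiderRel, hi']
  fin_cases j
  exacts [h₁'.reachable.trans h₁'₀.reachable, h₁.reachable, h₂.reachable]

theorem legs_eq_image_leg : legs n = univ.image leg := rfl

theorem connectingHypergraph_legs : (Gn n).ConnectingHypergraph (legs n) := by
  refine ⟨?_, fun u v huv hadj => ?_⟩
  · simp only [legs_eq_image_leg, mem_image, mem_univ, true_and, forall_exists_index,
      forall_apply_eq_imp_iff]
    exact fun i => ⟨by simp [card_leg], induce_leg_connected i⟩
  · have : (spider n).Adj u v := by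
      by_contra h
      exact hadj ⟨huv, h⟩
    obtain ⟨k, hk⟩ := spider_adj_iff.1 this
    refine ⟨leg k.1, mem_image_of_mem _ (mem_univ _), ?_⟩
    simpa [hk] using spiderEdge_mem_sym2_leg k

theorem hcost_legs : hcost (legs n) = 2 * n := by
  rw [hcost, legs_eq_image_leg, sum_image fun i _ j _ h => leg_injective h]
  simp [card_leg, mul_comm]

end Spider

theorem opt_eq (n : ℕ) : opt n = 2 * n := by
  have hlegs : 2 * n ∈ {c | ∃ H, (Gn n).ConnectingHypergraph H ∧ hcost H = c} :=
    ⟨legs n, connectingHypergraph_legs, hcost_legs⟩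
  refine le_antisymm (Nat.sInf_le hlegs) (le_csInf ⟨_, hlegs⟩ ?_)
  rintro _ ⟨H, hH, rfl⟩
  have := spider_isTree.isAcyclic.two_mul_ncard_edgeSet_le_hcost hH
  rw [ncard_spider_edgeSet] at this
  omega

theorem tau_Gn {n : ℕ} (hn : 2 ≤ n) : tau (Gn n) = 3 * n - 1 := by
  have hcard : Fintype.card (Option (Fin n × Fin 3)) = 3 * n + 1 := by simp [mul_comm]
  rw [tau_eq_card_sub_two (Gn_connected hn) (compl_Gn ▸ spider_connected) (by omega), hcard]
  omega

/-- For every `n ≥ 2`, `Gₙ` is connected and co-connected, `τ(Gₙ) = 3n − 1`, and the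
family `{{c, v_{i,1}, v_{i,2}, v_{i,3}} : 1 ≤ i ≤ n}` is a connecting hypergraph of
`Gₙ` of cost `2n`; hence `τ(Gₙ)/opt(Gₙ)` tends to `3/2`. -/
theorem stmt16 :
    (∀ n : ℕ, 2 ≤ n →
      (Gn n).Connected ∧ ((Gn n)ᶜ).Connected ∧ tau (Gn n) = 3 * n - 1 ∧
      (Gn n).ConnectingHypergraph (legs n) ∧ hcost (legs n) = 2 * n) ∧
    Filter.Tendsto (fun n : ℕ => (tau (Gn n) : ℝ) / (opt n : ℝ))
      Filter.atTop (nhds (3 / 2)) := by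
  refine ⟨fun n hn => ⟨Gn_connected hn, compl_Gn ▸ spider_connected, tau_Gn hn,
    connectingHypergraph_legs, hcost_legs⟩, ?_⟩
  have hlim : Filter.Tendsto (fun n : ℕ => 3 / 2 - (1 / (n : ℝ)) / 2) Filter.atTop
      (nhds (3 / 2)) := by
    simpa using
      tendsto_const_nhds.sub ((tendsto_one_div_atTop_nhds_zero_nat (𝕜 := ℝ)).div_const 2)
  refine hlim.congr' ?_
  filter_upwards [Filter.eventually_ge_atTop 2] with n hn
  have hn' : (n : ℝ) ≠ 0 := by positivity
  rw [tau_Gn hn, opt_eq, Nat.cast_sub (by omega)]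
  push_cast
  field_simp
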